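/- For any γ > 1 and σ ≥ 2/γ, the total variation distance between the σ-smoothed discrete Gaussian A_γ^σ and N(0, 1/(2π)) satisfies TV(A_γ^σ, Q) ≤ 8 exp(-π s²), where s = γσ/√(1+σ²). -/

import Mathlib

/-!
Rescaling by `√(1+σ²)/γ` turns `T_γ^σ(z)` into `Ψ_s(γz/√(1+σ²)) / θ(γ²)`, where
`Ψ_s(u) = (1/s) ∑ₖ exp(-π(u-k)²/s²)` is the periodic Gaussian of width `s` and
`θ(t) = ∑ₙ exp(-πtn²)`. By Poisson summation (the functional equation of Jacobi's theta function)
`Ψ_s(u) = ∑ₙ exp(-πs²n²) e^{2πinu}`, so `|Ψ_s - 1| ≤ θ(s²) - 1 ≤ 4 exp(-πs²)`; likewise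
`0 ≤ θ(γ²) - 1 ≤ 4 exp(-πγ²) ≤ 4 exp(-πs²)` since `s ≤ γ`. Hence `|T_γ^σ - 1| ≤ 8 exp(-πs²)`
pointwise, and integrating against the Gaussian density gives the bound.
-/

open Real

/-- Gaussian mass of the lattice `(1/γ)ℤ`. -/
noncomputable def latticeMass (γ : ℝ) : ℝ :=
  ∑' k : ℤ, Real.exp (-Real.pi * ((k : ℝ) / γ) ^ 2)

/-- Likelihood ratio `T_γ^σ` of the σ-smoothed discrete Gaussian on `(1/γ)ℤ`
with respect to `Q = N(0, 1/(2π))` (whose Lebesgue density is `exp(-πz²)`). -/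
noncomputable def pancakeLR (γ σ z : ℝ) : ℝ :=
  (Real.sqrt (1 + σ ^ 2) / (σ * latticeMass γ)) *
    ∑' k : ℤ, Real.exp (-Real.pi * (z - Real.sqrt (1 + σ ^ 2) * (k : ℝ) / γ) ^ 2 / σ ^ 2)

section JacobiTheta

open Complex

lemma summable_exp_neg_mul_int_sq {t : ℝ} (ht : 0 < t) :
    Summable fun n : ℤ => rexp (-π * t * n ^ 2) := by
  have h := (summable_jacobiTheta₂_term_iff 0 (t * I)).mpr (by simpa using ht)
  refine (summable_norm_iff.mpr h).congr fun n => ?_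
  rw [norm_jacobiTheta₂_term]
  simp only [mul_im, ofReal_re, I_im, ofReal_im, I_re, zero_im]
  ring_nf

lemma one_le_tsum_exp_neg_mul_int_sq {t : ℝ} (ht : 0 < t) :
    1 ≤ ∑' n : ℤ, rexp (-π * t * n ^ 2) := by
  simpa using (summable_exp_neg_mul_int_sq ht).le_tsum 0 fun n _ => (Real.exp_pos _).le

lemma ofReal_tsum_exp_neg_mul_int_sq (t : ℝ) :
    ((∑' n : ℤ, rexp (-π * t * n ^ 2) : ℝ) : ℂ) = jacobiTheta (t * I) := by
  rw [jacobiTheta, ofReal_tsum]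
  refine tsum_congr fun n => ?_
  rw [ofReal_exp]
  congr 1
  push_cast
  ring_nf
  rw [I_sq]
  ring

lemma tsum_exp_neg_mul_int_sq_sub_one_le {t : ℝ} (ht : 1 ≤ π * t) :
    ∑' n : ℤ, rexp (-π * t * n ^ 2) - 1 ≤ 4 * rexp (-π * t) := by
  have ht0 : 0 < t := by nlinarith [pi_pos]
  have hq : rexp (-π * t) ≤ 1 / 2 :=
    (Real.exp_le_exp.mpr (by linarith)).trans exp_neg_one_lt_half.le
  have h := norm_jacobiTheta_sub_one_le (τ := t * I) (by simpa using ht0)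
  rw [← ofReal_tsum_exp_neg_mul_int_sq, ← ofReal_one, ← ofReal_sub, norm_real,
    Real.norm_eq_abs] at h
  simp only [mul_im, ofReal_re, I_im, ofReal_im, I_re, mul_one, mul_zero, add_zero] at h
  calc _ ≤ 2 / (1 - rexp (-π * t)) * rexp (-π * t) := (le_abs_self _).trans h
    _ ≤ 4 * rexp (-π * t) := by
      gcongr
      rw [div_le_iff₀ (by linarith)]
      linarith

lemma norm_jacobiTheta₂_sub_one_le {z τ : ℂ} (hz : z.im = 0) (hτ : 0 < τ.im) :
    ‖jacobiTheta₂ z τ - 1‖ ≤ ∑' n : ℤ, rexp (-π * τ.im * n ^ 2) - 1 := by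
  have hθ := hasSum_ite_sub_hasSum (summable_exp_neg_mul_int_sq hτ).hasSum 0
  have hJ := hasSum_ite_sub_hasSum (hasSum_jacobiTheta₂_term z hτ) 0
  simp only [jacobiTheta₂_term, Int.cast_zero, mul_zero, zero_mul, add_zero, Complex.exp_zero,
    ne_eq, OfNat.ofNat_ne_zero, not_false_eq_true, zero_pow, Real.exp_zero] at hθ hJ
  refine hJ.norm_le_of_bounded hθ fun n => ?_
  split_ifs
  · simp
  · rw [← jacobiTheta₂_term, norm_jacobiTheta₂_term, hz]
    ring_nf
    exact le_rfl

noncomputable def periodicGaussian (s u : ℝ) : ℝ :=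
  (1 / s) * ∑' k : ℤ, rexp (-π * (u - k) ^ 2 / s ^ 2)

lemma ofReal_periodicGaussian {s : ℝ} (hs : 0 < s) (u : ℝ) :
    (periodicGaussian s u : ℂ) = jacobiTheta₂ u (s ^ 2 * I) := by
  have hroot : (-I * (s ^ 2 * I)) ^ (1 / 2 : ℂ) = s := by
    rw [show -I * (s ^ 2 * I) = ((s ^ 2 : ℝ) : ℂ) by push_cast; ring_nf; rw [I_sq]; ring,
      show (1 / 2 : ℂ) = ((1 / 2 : ℝ) : ℂ) by push_cast; rfl, ← ofReal_cpow (sq_nonneg s),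
      ← Real.sqrt_eq_rpow, Real.sqrt_sq hs.le]
  rw [jacobiTheta₂_functional_equation, hroot, jacobiTheta₂, mul_assoc, ← tsum_mul_left,
    periodicGaussian, ofReal_mul, ofReal_tsum]
  push_cast
  congr 1
  refine tsum_congr fun k => ?_
  rw [jacobiTheta₂_term, ← Complex.exp_add]
  congr 1
  field_simp
  ring_nf

lemma abs_periodicGaussian_sub_one_le {s : ℝ} (hs : 0 < s) (hπs : 1 ≤ π * s ^ 2) (u : ℝ) :
    |periodicGaussian s u - 1| ≤ 4 * rexp (-π * s ^ 2) := by
  have him : (s ^ 2 * I : ℂ).im = s ^ 2 := by simp [← ofReal_pow]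
  calc |periodicGaussian s u - 1| = ‖jacobiTheta₂ u (s ^ 2 * I) - 1‖ := by
        rw [← ofReal_periodicGaussian hs, ← ofReal_one, ← ofReal_sub, norm_real, Real.norm_eq_abs]
    _ ≤ ∑' n : ℤ, rexp (-π * s ^ 2 * n ^ 2) - 1 := by
        have h := norm_jacobiTheta₂_sub_one_le (τ := s ^ 2 * I) (ofReal_im u)
          (by rw [him]; positivity)
        rwa [him] at h
    _ ≤ 4 * rexp (-π * s ^ 2) := tsum_exp_neg_mul_int_sq_sub_one_le hπs

end JacobiTheta

lemma latticeMass_eq {γ : ℝ} (hγ : 0 < γ) :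
    latticeMass γ = γ * ∑' n : ℤ, rexp (-π * γ ^ 2 * n ^ 2) := by
  have h := Real.tsum_exp_neg_mul_int_sq (a := (γ ^ 2)⁻¹) (by positivity)
  rw [← Real.sqrt_eq_rpow, Real.sqrt_inv, Real.sqrt_sq hγ.le, one_div, inv_inv] at h
  simp only [div_inv_eq_mul] at h
  rw [latticeMass, ← h]
  refine tsum_congr fun k => ?_
  congr 1
  ring

lemma pancakeLR_eq {γ σ : ℝ} (hγ : 0 < γ) (hσ : 0 < σ) (z : ℝ) :
    pancakeLR γ σ z = periodicGaussian (γ * σ / √(1 + σ ^ 2)) (γ * z / √(1 + σ ^ 2)) /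
      ∑' n : ℤ, rexp (-π * γ ^ 2 * n ^ 2) := by
  rw [pancakeLR, periodicGaussian, latticeMass_eq hγ]
  field_simp

lemma abs_div_sub_one_le {a M : ℝ} (hM : 1 ≤ M) : |a / M - 1| ≤ |a - 1| + (M - 1) := by
  have hM0 : 0 < M := by linarith
  calc |a / M - 1| = |a - M| / M := by rw [div_sub_one hM0.ne', abs_div, abs_of_pos hM0]
    _ ≤ |a - M| := div_le_self (abs_nonneg _) hM
    _ ≤ |a - 1| + |1 - M| := abs_sub_le a 1 M
    _ = |a - 1| + (M - 1) := by rw [abs_sub_comm 1 M, abs_of_nonneg (sub_nonneg.mpr hM)]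

lemma abs_pancakeLR_sub_one_le {γ σ : ℝ} (hγ : 0 < γ) (hσ : 0 < σ)
    (hs : 1 ≤ π * (γ * σ / √(1 + σ ^ 2)) ^ 2) (z : ℝ) :
    |pancakeLR γ σ z - 1| ≤ 8 * rexp (-π * (γ * σ / √(1 + σ ^ 2)) ^ 2) := by
  set s := γ * σ / √(1 + σ ^ 2)
  have hsγ : s ^ 2 ≤ γ ^ 2 := by
    rw [div_pow, Real.sq_sqrt (by positivity), div_le_iff₀ (by positivity)]
    nlinarith [sq_nonneg γ]
  have hπγ : π * s ^ 2 ≤ π * γ ^ 2 := mul_le_mul_of_nonneg_left hsγ pi_pos.le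
  have hexp : rexp (-π * γ ^ 2) ≤ rexp (-π * s ^ 2) := Real.exp_le_exp.mpr (by linarith)
  rw [pancakeLR_eq hγ hσ]
  calc _ ≤ |periodicGaussian s (γ * z / √(1 + σ ^ 2)) - 1|
          + (∑' n : ℤ, rexp (-π * γ ^ 2 * n ^ 2) - 1) :=
        abs_div_sub_one_le (one_le_tsum_exp_neg_mul_int_sq (by positivity))
    _ ≤ 4 * rexp (-π * s ^ 2) + 4 * rexp (-π * γ ^ 2) :=
        add_le_add (abs_periodicGaussian_sub_one_le (by positivity) hs _)
          (tsum_exp_neg_mul_int_sq_sub_one_le (hs.trans hπγ))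
    _ ≤ 8 * rexp (-π * s ^ 2) := by linarith

lemma integral_exp_neg_pi_mul_sq_mul_abs_le {f : ℝ → ℝ} {C : ℝ} (hf : ∀ z, |f z| ≤ C) :
    ∫ z, rexp (-π * z ^ 2) * |f z| ≤ C :=
  calc ∫ z, rexp (-π * z ^ 2) * |f z| ≤ ∫ z, rexp (-π * z ^ 2) * C :=
        MeasureTheory.integral_mono_of_nonneg (Filter.Eventually.of_forall fun z => by positivity)
          ((integrable_exp_neg_mul_sq pi_pos).mul_const C)
          (Filter.Eventually.of_forall fun z => mul_le_mul_of_nonneg_left (hf z) (exp_pos _).le)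
    _ = C := by
        rw [MeasureTheory.integral_mul_const, integral_gaussian, div_self pi_ne_zero,
          Real.sqrt_one, one_mul]

/-- TV upper bound: for `γ > 1` and `σ ≥ 2/γ`, with `s = γσ/√(1+σ²)`,
`TV(A_γ^σ, Q) = (1/2)∫ exp(-πz²)|T_γ^σ(z) − 1| dz ≤ 8 exp(-πs²)`. -/
theorem smoothedDiscreteGaussian_tv_upper (γ σ : ℝ) (hγ : 1 < γ) (hσ : σ ≥ 2 / γ) :
    (1 / 2) * ∫ z : ℝ, Real.exp (-Real.pi * z ^ 2) * |pancakeLR γ σ z - 1|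
      ≤ 8 * Real.exp (-Real.pi * (γ * σ / Real.sqrt (1 + σ ^ 2)) ^ 2) := by
  have hγ0 : 0 < γ := by linarith
  have hσ0 : 0 < σ := (by positivity : 0 < 2 / γ).trans_le hσ
  have hγσ : 2 ≤ σ * γ := (div_le_iff₀ hγ0).mp hσ
  -- `s² = γ²σ²/(1+σ²) ≥ 4/5` because `γσ ≥ 2` and `σ ≤ γσ`.
  have hs : 1 ≤ π * (γ * σ / √(1 + σ ^ 2)) ^ 2 := by
    rw [div_pow, Real.sq_sqrt (by positivity), mul_div_assoc', le_div_iff₀ (by positivity)]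
    nlinarith [pi_gt_three, mul_le_mul hγσ hγσ (by norm_num) (by positivity),
      mul_le_mul_of_nonneg_left hγ.le (mul_pos hσ0 hσ0).le]
  have hT := integral_exp_neg_pi_mul_sq_mul_abs_le (abs_pancakeLR_sub_one_le hγ0 hσ0 hs)
  linarith [Real.exp_pos (-π * (γ * σ / √(1 + σ ^ 2)) ^ 2)]
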